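/- In the graph A_{k,P}(S_a, S_b): if there exists an index 0 ≤ i ≤ k−1 with S_a(i) = 1 and S_b(i) = 1, then the diameter (the maximum of d(u,v) over all pairs of vertices) is at least 6P + 1; and if for every 0 ≤ i ≤ k−1 either S_a(i) = 0 or S_b(i) = 0, then d(u, v) ≤ 4P + 2 for all vertices u, v. -/
import Mathlib


/-!
Statement 8: In the graph `A_{k,P}(S_a, S_b)`: if there exists an index `i`
with `S_a(i) = 1` and `S_b(i) = 1`, then the diameter (the maximum of
`d(u,v)` over all pairs of vertices) is at least `6P + 1`; and if for every
`i` either `S_a(i) = 0` or `S_b(i) = 0`, then `d(u, v) ≤ 4P + 2` for all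
vertices `u, v`.
-/

/-- Generic graph built from "hub" vertices and "segments": each segment `s`
is a path with `len s` edges between the two hubs `ends s`, whose
`len s - 1` internal vertices are the pairs `⟨s, t⟩`.  A segment of length 1
is just an edge between its two endpoints. -/
def segGraph {Hub Seg : Type} (ends : Seg → Hub × Hub) (len : Seg → ℕ) :
    SimpleGraph (Hub ⊕ (s : Seg) × Fin (len s - 1)) :=
  SimpleGraph.fromRel fun u v =>
    match u, v with
    | Sum.inl x, Sum.inl y => ∃ s, len s = 1 ∧ ends s = (x, y)
    | Sum.inl x, Sum.inr ⟨s, t⟩ =>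
        ((ends s).1 = x ∧ (t : ℕ) = 0) ∨ ((ends s).2 = x ∧ (t : ℕ) + 2 = len s)
    | Sum.inr ⟨s, t⟩, Sum.inl x =>
        ((ends s).1 = x ∧ (t : ℕ) = 0) ∨ ((ends s).2 = x ∧ (t : ℕ) + 2 = len s)
    | Sum.inr ⟨s, t⟩, Sum.inr ⟨s', t'⟩ =>
        s = s' ∧ ((t : ℕ) + 1 = (t' : ℕ) ∨ (t' : ℕ) + 1 = (t : ℕ))

namespace StretchDiam

/-- Hub (distinguished) vertices of the stretched diameter graph `A_{k,P}`. -/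
inductive Hub (m : ℕ) : Type
  | L : Fin (2 ^ m) → Hub m
  | L' : Fin (2 ^ m) → Hub m
  | R : Fin (2 ^ m) → Hub m
  | R' : Fin (2 ^ m) → Hub m
  | lk : Hub m
  | lk1 : Hub m
  | rk : Hub m
  | rk1 : Hub m
  | F : Fin m → Hub m
  | T : Fin m → Hub m
  | F' : Fin m → Hub m
  | T' : Fin m → Hub m

/-- Segments (paths between hubs) of `A_{k,P}`. -/
inductive Seg (m : ℕ) : Type
  | Llk : Fin (2 ^ m) → Seg m            -- ℓ_i – ℓ_k, length P
  | Rrk : Fin (2 ^ m) → Seg m            -- r_i – r_k, length P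
  | lklk1 : Seg m                        -- ℓ_k – ℓ_{k+1}, length P
  | rkrk1 : Seg m                        -- r_k – r_{k+1}, length P
  | lk1rk1 : Seg m                       -- edge ℓ_{k+1} – r_{k+1}
  | Lbit : Fin (2 ^ m) → Fin m → Seg m   -- ℓ_i – (f_j or t_j), length P
  | Rbit : Fin (2 ^ m) → Fin m → Seg m   -- r_i – (f'_j or t'_j), length P
  | FT' : Fin m → Seg m                  -- edge f_j – t'_j
  | TF' : Fin m → Seg m                  -- edge t_j – f'_j
  | Flk1 : Fin m → Seg m                 -- f_j – ℓ_{k+1}, length P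
  | Tlk1 : Fin m → Seg m                 -- t_j – ℓ_{k+1}, length P
  | F'rk1 : Fin m → Seg m                -- f'_j – r_{k+1}, length P
  | T'rk1 : Fin m → Seg m                -- t'_j – r_{k+1}, length P
  | L'L : Fin (2 ^ m) → Seg m            -- ℓ'_i – ℓ_i, length P
  | R'R : Fin (2 ^ m) → Seg m            -- r'_i – r_i, length P

open Hub Seg

/-- Endpoints of each segment. -/
def ends (m : ℕ) : Seg m → Hub m × Hub m
  | Llk i => (L i, lk)
  | Rrk i => (R i, rk)
  | lklk1 => (lk, lk1)
  | rkrk1 => (rk, rk1)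
  | lk1rk1 => (lk1, rk1)
  | Lbit i j => (L i, if Nat.testBit i.val j.val then T j else F j)
  | Rbit i j => (R i, if Nat.testBit i.val j.val then T' j else F' j)
  | FT' j => (F j, T' j)
  | TF' j => (T j, F' j)
  | Flk1 j => (F j, lk1)
  | Tlk1 j => (T j, lk1)
  | F'rk1 j => (F' j, rk1)
  | T'rk1 j => (T' j, rk1)
  | L'L i => (L' i, L i)
  | R'R i => (R' i, R i)

/-- Length of each segment: the three special edges have length 1, all other
segments are paths of length `P`. -/
def len (m P : ℕ) : Seg m → ℕ
  | lk1rk1 => 1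
  | FT' _ => 1
  | TF' _ => 1
  | _ => P

/-- Vertices of `A_{k,P}`: hubs together with internal path vertices. -/
abbrev V (m P : ℕ) : Type := Hub m ⊕ (s : Seg m) × Fin (len m P s - 1)

/-- The stretched diameter graph `A_{k,P}`. -/
def A (m P : ℕ) : SimpleGraph (V m P) := segGraph (ends m) (len m P)

/-- Extra edges depending on the input strings: an edge `ℓ_i–ℓ_{k+1}` for each
`i` with `S_a(i) = 0`, and an edge `r_i–r_{k+1}` for each `i` with `S_b(i) = 0`. -/
def extraRel (m P : ℕ) (Sa Sb : Fin (2 ^ m) → Bool) : V m P → V m P → Prop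
  | Sum.inl (L i), Sum.inl lk1 => Sa i = false
  | Sum.inl (R i), Sum.inl rk1 => Sb i = false
  | _, _ => False

/-- The graph `A_{k,P}(S_a, S_b)`. -/
def AS (m P : ℕ) (Sa Sb : Fin (2 ^ m) → Bool) : SimpleGraph (V m P) :=
  A m P ⊔ SimpleGraph.fromRel (extraRel m P Sa Sb)

/-! ### Auxiliary development -/

section Aux

variable {m P : ℕ} {Sa Sb : Fin (2 ^ m) → Bool}

/-- `WB u v n`: there is a walk from `u` to `v` of length at most `n`. -/
def WB (Sa Sb : Fin (2 ^ m) → Bool) (u v : V m P) (n : ℕ) : Prop :=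
  ∃ w : (AS m P Sa Sb).Walk u v, w.length ≤ n

namespace WB

lemma rfl' (u : V m P) (n : ℕ) : WB Sa Sb u u n := ⟨.nil, by simp⟩

lemma mono {u v : V m P} {a b : ℕ} (h : WB Sa Sb u v a) (hab : a ≤ b) :
    WB Sa Sb u v b := by obtain ⟨w, hw⟩ := h; exact ⟨w, hw.trans hab⟩

lemma symm {u v : V m P} {a : ℕ} (h : WB Sa Sb u v a) : WB Sa Sb v u a := by
  obtain ⟨w, hw⟩ := h; exact ⟨w.reverse, by simpa using hw⟩

lemma trans {u v x : V m P} {a b : ℕ} (h : WB Sa Sb u v a) (h' : WB Sa Sb v x b) :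
    WB Sa Sb u x (a + b) := by
  obtain ⟨w, hw⟩ := h; obtain ⟨w', hw'⟩ := h'
  exact ⟨w.append w', by simp [SimpleGraph.Walk.length_append]; omega⟩

lemma of_adj {u v : V m P} (h : (AS m P Sa Sb).Adj u v) : WB Sa Sb u v 1 :=
  ⟨h.toWalk, by simp⟩

lemma dist_le {u v : V m P} {n : ℕ} (h : WB Sa Sb u v n) :
    (AS m P Sa Sb).dist u v ≤ n := by
  obtain ⟨w, hw⟩ := h; exact (SimpleGraph.dist_le w).trans hw

lemma reachable {u v : V m P} {n : ℕ} (h : WB Sa Sb u v n) :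
    (AS m P Sa Sb).Reachable u v := by
  obtain ⟨w, _⟩ := h; exact ⟨w⟩

end WB

lemma ends_ne (s : Seg m) : (ends m s).1 ≠ (ends m s).2 := by
  cases s <;> simp only [ends] <;> try split
  all_goals simp

lemma adj_A {u v : V m P} (h : (A m P).Adj u v) : (AS m P Sa Sb).Adj u v := by
  rw [AS, SimpleGraph.sup_adj]; exact Or.inl h

lemma adj_first (s : Seg m) (t : Fin (len m P s - 1)) (ht : (t : ℕ) = 0) :
    (AS m P Sa Sb).Adj (Sum.inl (ends m s).1) (Sum.inr ⟨s, t⟩) := by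
  apply adj_A
  rw [A, segGraph, SimpleGraph.fromRel_adj]
  exact ⟨by simp, Or.inl (Or.inl ⟨rfl, ht⟩)⟩

lemma adj_last (s : Seg m) (t : Fin (len m P s - 1)) (ht : (t : ℕ) + 2 = len m P s) :
    (AS m P Sa Sb).Adj (Sum.inr ⟨s, t⟩) (Sum.inl (ends m s).2) := by
  apply adj_A
  rw [A, segGraph, SimpleGraph.fromRel_adj]
  exact ⟨by simp, Or.inl (Or.inr ⟨rfl, ht⟩)⟩

lemma adj_step (s : Seg m) (t t' : Fin (len m P s - 1)) (ht : (t : ℕ) + 1 = (t' : ℕ)) :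
    (AS m P Sa Sb).Adj (Sum.inr ⟨s, t⟩) (Sum.inr ⟨s, t'⟩) := by
  apply adj_A
  rw [A, segGraph, SimpleGraph.fromRel_adj]
  refine ⟨fun h => ?_, Or.inl ⟨rfl, Or.inl ht⟩⟩
  injection h with h'
  injection h' with hs htEq
  rw [htEq] at ht
  omega

lemma adj_hub (s : Seg m) (h1 : len m P s = 1) :
    (AS m P Sa Sb).Adj (Sum.inl (ends m s).1) (Sum.inl (ends m s).2) := by
  apply adj_A
  rw [A, segGraph, SimpleGraph.fromRel_adj]
  exact ⟨by simpa using ends_ne s, Or.inl ⟨s, h1, rfl⟩⟩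

lemma wb_first (s : Seg m) : ∀ (n : ℕ) (hn : n < len m P s - 1),
    WB Sa Sb (Sum.inl (ends m s).1) (Sum.inr ⟨s, ⟨n, hn⟩⟩) (n + 1) := by
  intro n
  induction n with
  | zero => intro hn; exact .of_adj (adj_first s ⟨0, hn⟩ rfl)
  | succ k ih =>
      intro hn
      exact ((ih (by omega)).trans (.of_adj (adj_step s ⟨k, by omega⟩ ⟨k + 1, hn⟩ rfl))).mono
        (by omega)

lemma wb_last_aux (s : Seg m) : ∀ (j n : ℕ) (hn : n < len m P s - 1),
    len m P s - 2 - n = j →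
    WB Sa Sb (Sum.inr ⟨s, ⟨n, hn⟩⟩) (Sum.inl (ends m s).2) (len m P s - 1 - n) := by
  intro j
  induction j with
  | zero =>
      intro n hn hj
      have h2 : (n : ℕ) + 2 = len m P s := by omega
      have := WB.of_adj (Sa := Sa) (Sb := Sb) (adj_last s ⟨n, hn⟩ h2)
      exact this.mono (by omega)
  | succ k ih =>
      intro n hn hj
      have hn' : n + 1 < len m P s - 1 := by omega
      have step := WB.of_adj (Sa := Sa) (Sb := Sb) (adj_step s ⟨n, hn⟩ ⟨n + 1, hn'⟩ rfl)
      exact (step.trans (ih (n + 1) hn' (by omega))).mono (by omega)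

lemma wb_last (s : Seg m) (n : ℕ) (hn : n < len m P s - 1) :
    WB Sa Sb (Sum.inr ⟨s, ⟨n, hn⟩⟩) (Sum.inl (ends m s).2) (len m P s - 1 - n) :=
  wb_last_aux s _ n hn rfl

lemma len_pos (hP : 1 ≤ P) (s : Seg m) : 1 ≤ len m P s := by
  cases s <;> simp [len] <;> omega

lemma wb_ends (hP : 1 ≤ P) (s : Seg m) :
    WB (P := P) Sa Sb (Sum.inl (ends m s).1) (Sum.inl (ends m s).2) (len m P s) := by
  rcases Nat.lt_or_ge (len m P s) 2 with h2 | h2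
  · have h1 : len m P s = 1 := by have := len_pos (P := P) hP s; omega
    exact (WB.of_adj (adj_hub s h1)).mono (by omega)
  · have hn : len m P s - 2 < len m P s - 1 := by omega
    exact ((wb_first s (len m P s - 2) hn).trans (wb_last s (len m P s - 2) hn)).mono (by omega)

end Aux

section Upper

variable {m P : ℕ} {Sa Sb : Fin (2 ^ m) → Bool}

open Hub Seg

lemma wb_seg (hP : 1 ≤ P) (s : Seg m) (x y : Hub m) (hx : (ends m s).1 = x)
    (hy : (ends m s).2 = y) (n : ℕ) (hn : len m P s ≤ n) :
    WB (P := P) Sa Sb (Sum.inl x) (Sum.inl y) n := by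
  subst hx hy; exact (wb_ends hP s).mono hn

lemma wb_L_lk (hP : 1 ≤ P) (j : Fin (2 ^ m)) :
    WB (P := P) Sa Sb (Sum.inl (L j)) (Sum.inl lk) P :=
  wb_seg hP (Llk j) _ _ rfl rfl P le_rfl

lemma wb_lk_lk1 (hP : 1 ≤ P) :
    WB (P := P) Sa Sb (Sum.inl (lk : Hub m)) (Sum.inl lk1) P :=
  wb_seg hP lklk1 _ _ rfl rfl P le_rfl

lemma wb_R_rk (hP : 1 ≤ P) (j : Fin (2 ^ m)) :
    WB (P := P) Sa Sb (Sum.inl (R j)) (Sum.inl rk) P :=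
  wb_seg hP (Rrk j) _ _ rfl rfl P le_rfl

lemma wb_rk_rk1 (hP : 1 ≤ P) :
    WB (P := P) Sa Sb (Sum.inl (rk : Hub m)) (Sum.inl rk1) P :=
  wb_seg hP rkrk1 _ _ rfl rfl P le_rfl

lemma wb_lk1_rk1 (hP : 1 ≤ P) :
    WB (P := P) Sa Sb (Sum.inl (lk1 : Hub m)) (Sum.inl rk1) 1 :=
  wb_seg hP lk1rk1 _ _ rfl rfl 1 le_rfl

lemma wb_L_lk1 (hP : 1 ≤ P) (j : Fin (2 ^ m)) :
    WB (P := P) Sa Sb (Sum.inl (L j)) (Sum.inl lk1) (2 * P) := by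
  have := (wb_L_lk (Sa := Sa) (Sb := Sb) hP j).trans (wb_lk_lk1 hP)
  exact this.mono (by omega)

lemma wb_R_rk1 (hP : 1 ≤ P) (j : Fin (2 ^ m)) :
    WB (P := P) Sa Sb (Sum.inl (R j)) (Sum.inl rk1) (2 * P) := by
  have := (wb_R_rk (Sa := Sa) (Sb := Sb) hP j).trans (wb_rk_rk1 hP)
  exact this.mono (by omega)

lemma exists_diff_bit {a b : Fin (2 ^ m)} (h : a ≠ b) :
    ∃ c : Fin m, Nat.testBit (a : ℕ) (c : ℕ) ≠ Nat.testBit (b : ℕ) (c : ℕ) := by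
  by_contra hall
  push_neg at hall
  apply h
  apply Fin.ext
  apply Nat.eq_of_testBit_eq
  intro j
  by_cases hj : j < m
  · exact hall ⟨j, hj⟩
  · rw [Nat.testBit_lt_two_pow, Nat.testBit_lt_two_pow]
    · exact lt_of_lt_of_le b.isLt (Nat.pow_le_pow_right (by omega) (by omega))
    · exact lt_of_lt_of_le a.isLt (Nat.pow_le_pow_right (by omega) (by omega))

lemma adj_extra_L {j : Fin (2 ^ m)} (h : Sa j = false) :
    (AS m P Sa Sb).Adj (Sum.inl (L j)) (Sum.inl lk1) := by
  rw [AS, SimpleGraph.sup_adj]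
  exact Or.inr ⟨by simp, Or.inl h⟩

lemma adj_extra_R {j : Fin (2 ^ m)} (h : Sb j = false) :
    (AS m P Sa Sb).Adj (Sum.inl (R j)) (Sum.inl rk1) := by
  rw [AS, SimpleGraph.sup_adj]
  exact Or.inr ⟨by simp, Or.inl h⟩

/-- The key crossing lemma: `d(ℓ_a, r_b) ≤ 2P + 2`. -/
lemma wb_LR (hP : 1 ≤ P) (hyp : ∀ i : Fin (2 ^ m), Sa i = false ∨ Sb i = false)
    (a b : Fin (2 ^ m)) :
    WB (P := P) Sa Sb (Sum.inl (L a)) (Sum.inl (R b)) (2 * P + 2) := by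
  by_cases hab : a = b
  · subst hab
    rcases hyp a with h | h
    · have e1 : WB (P := P) Sa Sb (Sum.inl (L a)) (Sum.inl lk1) 1 := .of_adj (adj_extra_L h)
      have e2 := wb_lk1_rk1 (Sa := Sa) (Sb := Sb) (m := m) (P := P) hP
      have e3 : WB (P := P) Sa Sb (Sum.inl rk1) (Sum.inl (R a)) (2 * P) :=
        (wb_R_rk1 hP a).symm
      exact ((e1.trans e2).trans e3).mono (by omega)
    · have e1 := wb_L_lk1 (Sa := Sa) (Sb := Sb) hP a
      have e2 := wb_lk1_rk1 (Sa := Sa) (Sb := Sb) (m := m) (P := P) hP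
      have e3 : WB (P := P) Sa Sb (Sum.inl rk1) (Sum.inl (R a)) 1 :=
        (WB.of_adj (adj_extra_R h)).symm
      exact ((e1.trans e2).trans e3).mono (by omega)
  · obtain ⟨c, hc⟩ := exists_diff_bit hab
    rcases hA : Nat.testBit (a : ℕ) (c : ℕ) with _ | _
    · have hB : Nat.testBit (b : ℕ) (c : ℕ) = true := by
        rw [hA] at hc; exact Bool.of_not_eq_false fun hh => hc (hh ▸ rfl)
      -- a-bit is 0 : L a — F c — T' c — R b
      have e1 : WB (P := P) Sa Sb (Sum.inl (L a)) (Sum.inl (F c)) P :=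
        wb_seg hP (Lbit a c) _ _ rfl (by simp [ends, hA]) P le_rfl
      have e2 : WB (P := P) Sa Sb (Sum.inl (F c)) (Sum.inl (T' c)) 1 :=
        wb_seg hP (FT' c) _ _ rfl rfl 1 le_rfl
      have e3 : WB (P := P) Sa Sb (Sum.inl (T' c)) (Sum.inl (R b)) P :=
        (wb_seg hP (Rbit b c) _ _ rfl (by simp [ends, hB]) P le_rfl).symm
      exact ((e1.trans e2).trans e3).mono (by omega)
    · have hB : Nat.testBit (b : ℕ) (c : ℕ) = false := by
        rw [hA] at hc; exact Bool.of_not_eq_true fun hh => hc (hh ▸ rfl)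
      have e1 : WB (P := P) Sa Sb (Sum.inl (L a)) (Sum.inl (T c)) P :=
        wb_seg hP (Lbit a c) _ _ rfl (by simp [ends, hA]) P le_rfl
      have e2 : WB (P := P) Sa Sb (Sum.inl (T c)) (Sum.inl (F' c)) 1 :=
        wb_seg hP (TF' c) _ _ rfl rfl 1 le_rfl
      have e3 : WB (P := P) Sa Sb (Sum.inl (F' c)) (Sum.inl (R b)) P :=
        (wb_seg hP (Rbit b c) _ _ rfl (by simp [ends, hB]) P le_rfl).symm
      exact ((e1.trans e2).trans e3).mono (by omega)

/-- Every vertex is within distance `P` of an anchor hub. -/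
lemma classify (hP : 1 ≤ P) (v : V m P) :
    (∃ j, WB (P := P) Sa Sb v (Sum.inl (L j)) P) ∨
    WB (P := P) Sa Sb v (Sum.inl lk1) P ∨
    (∃ j, WB (P := P) Sa Sb v (Sum.inl (R j)) P) ∨
    WB (P := P) Sa Sb v (Sum.inl rk1) P := by
  rcases v with h | ⟨s, t⟩
  · cases h with
    | L j => exact Or.inl ⟨j, .rfl' _ _⟩
    | L' j => exact Or.inl ⟨j, wb_seg hP (L'L j) _ _ rfl rfl P le_rfl⟩
    | lk => exact Or.inr (Or.inl (wb_lk_lk1 hP))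
    | lk1 => exact Or.inr (Or.inl (.rfl' _ _))
    | F b => exact Or.inr (Or.inl (wb_seg hP (Flk1 b) _ _ rfl rfl P le_rfl))
    | T b => exact Or.inr (Or.inl (wb_seg hP (Tlk1 b) _ _ rfl rfl P le_rfl))
    | R j => exact Or.inr (Or.inr (Or.inl ⟨j, .rfl' _ _⟩))
    | R' j => exact Or.inr (Or.inr (Or.inl ⟨j, wb_seg hP (R'R j) _ _ rfl rfl P le_rfl⟩))
    | rk => exact Or.inr (Or.inr (Or.inr (wb_rk_rk1 hP)))
    | rk1 => exact Or.inr (Or.inr (Or.inr (.rfl' _ _)))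
    | F' b => exact Or.inr (Or.inr (Or.inr (wb_seg hP (F'rk1 b) _ _ rfl rfl P le_rfl)))
    | T' b => exact Or.inr (Or.inr (Or.inr (wb_seg hP (T'rk1 b) _ _ rfl rfl P le_rfl)))
  · obtain ⟨n, hn⟩ := t
    cases s with
    | Llk j => exact Or.inl ⟨j, ((wb_first (Llk j) n hn).symm).mono (by simp [len] at hn ⊢; omega)⟩
    | Lbit j b =>
        exact Or.inl ⟨j, ((wb_first (Lbit j b) n hn).symm).mono (by simp [len] at hn ⊢; omega)⟩
    | lklk1 => exact Or.inr (Or.inl ((wb_last lklk1 n hn).mono (by simp [len]; omega)))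
    | Flk1 b => exact Or.inr (Or.inl ((wb_last (Flk1 b) n hn).mono (by simp [len]; omega)))
    | Tlk1 b => exact Or.inr (Or.inl ((wb_last (Tlk1 b) n hn).mono (by simp [len]; omega)))
    | L'L j =>
        exact Or.inl ⟨j, (wb_last (L'L j) n hn).mono (by simp [len]; omega)⟩
    | Rrk j => exact Or.inr (Or.inr (Or.inl ⟨j, ((wb_first (Rrk j) n hn).symm).mono
        (by simp [len] at hn ⊢; omega)⟩))
    | Rbit j b => exact Or.inr (Or.inr (Or.inl ⟨j, ((wb_first (Rbit j b) n hn).symm).mono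
        (by simp [len] at hn ⊢; omega)⟩))
    | rkrk1 => exact Or.inr (Or.inr (Or.inr ((wb_last rkrk1 n hn).mono (by simp [len]; omega))))
    | F'rk1 b =>
        exact Or.inr (Or.inr (Or.inr ((wb_last (F'rk1 b) n hn).mono (by simp [len]; omega))))
    | T'rk1 b =>
        exact Or.inr (Or.inr (Or.inr ((wb_last (T'rk1 b) n hn).mono (by simp [len]; omega))))
    | R'R j =>
        exact Or.inr (Or.inr (Or.inl ⟨j, (wb_last (R'R j) n hn).mono (by simp [len]; omega)⟩))
    | lk1rk1 => exact absurd hn (by simp [len])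
    | FT' b => exact absurd hn (by simp [len])
    | TF' b => exact absurd hn (by simp [len])

lemma upper (hP : 1 ≤ P) (hyp : ∀ i : Fin (2 ^ m), Sa i = false ∨ Sb i = false)
    (u v : V m P) : (AS m P Sa Sb).dist u v ≤ 4 * P + 2 := by
  have glue : ∀ {x y : Hub m}, WB (P := P) Sa Sb u (Sum.inl x) P →
      WB (P := P) Sa Sb v (Sum.inl y) P →
      WB (P := P) Sa Sb (Sum.inl x) (Sum.inl y) (2 * P + 2) →
      (AS m P Sa Sb).dist u v ≤ 4 * P + 2 := by
    intro x y h1 h2 h3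
    exact (((h1.trans h3).trans h2.symm).mono (by omega)).dist_le
  have hLL : ∀ a b : Fin (2 ^ m),
      WB (P := P) Sa Sb (Sum.inl (L a)) (Sum.inl (L b)) (2 * P + 2) := fun a b =>
    ((wb_L_lk hP a).trans (wb_L_lk hP b).symm).mono (by omega)
  have hRR : ∀ a b : Fin (2 ^ m),
      WB (P := P) Sa Sb (Sum.inl (R a)) (Sum.inl (R b)) (2 * P + 2) := fun a b =>
    ((wb_R_rk hP a).trans (wb_R_rk hP b).symm).mono (by omega)
  have hLlk1 : ∀ a : Fin (2 ^ m),
      WB (P := P) Sa Sb (Sum.inl (L a)) (Sum.inl lk1) (2 * P + 2) := fun a =>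
    (wb_L_lk1 hP a).mono (by omega)
  have hRrk1 : ∀ a : Fin (2 ^ m),
      WB (P := P) Sa Sb (Sum.inl (R a)) (Sum.inl rk1) (2 * P + 2) := fun a =>
    (wb_R_rk1 hP a).mono (by omega)
  have hLrk1 : ∀ a : Fin (2 ^ m),
      WB (P := P) Sa Sb (Sum.inl (L a)) (Sum.inl rk1) (2 * P + 2) := by
    intro a
    have h1 := wb_L_lk1 (Sa := Sa) (Sb := Sb) hP a
    have h2 := wb_lk1_rk1 (m := m) (P := P) (Sa := Sa) (Sb := Sb) hP
    exact (h1.trans h2).mono (by omega)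
  have hRlk1 : ∀ a : Fin (2 ^ m),
      WB (P := P) Sa Sb (Sum.inl (R a)) (Sum.inl lk1) (2 * P + 2) := by
    intro a
    have h1 := wb_R_rk1 (Sa := Sa) (Sb := Sb) hP a
    have h2 := wb_lk1_rk1 (m := m) (P := P) (Sa := Sa) (Sb := Sb) hP
    exact (h1.trans h2.symm).mono (by omega)
  have hcc : WB (P := P) Sa Sb (Sum.inl (lk1 : Hub m)) (Sum.inl rk1) (2 * P + 2) :=
    (wb_lk1_rk1 hP).mono (by omega)
  rcases classify (Sa := Sa) (Sb := Sb) hP u with ⟨a, hu⟩ | hu | ⟨a, hu⟩ | hu <;>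
    rcases classify (Sa := Sa) (Sb := Sb) hP v with ⟨b, hv⟩ | hv | ⟨b, hv⟩ | hv
  · exact glue hu hv (hLL a b)
  · exact glue hu hv (hLlk1 a)
  · exact glue hu hv (wb_LR hP hyp a b)
  · exact glue hu hv (hLrk1 a)
  · exact glue hu hv (hLlk1 b).symm
  · exact glue hu hv (WB.rfl' _ _)
  · exact glue hu hv (hRlk1 b).symm
  · exact glue hu hv hcc
  · exact glue hu hv (wb_LR hP hyp b a).symm
  · exact glue hu hv (hRlk1 a)
  · exact glue hu hv (hRR a b)
  · exact glue hu hv (hRrk1 a)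
  · exact glue hu hv (hLrk1 b).symm
  · exact glue hu hv hcc.symm
  · exact glue hu hv (hRrk1 b).symm
  · exact glue hu hv (WB.rfl' _ _)

end Upper

section Lower

variable {m P : ℕ} {Sa Sb : Fin (2 ^ m) → Bool}

open Hub Seg

/-- Potential function on hubs, witnessing `d(ℓ'_i, r'_i) ≥ 6P + 1`. -/
def phiH (m P : ℕ) (i : Fin (2 ^ m)) : Hub m → ℤ
  | L j => if j = i then (P : ℤ) else 3 * P
  | L' j => if j = i then 0 else 3 * P
  | lk => 2 * P
  | lk1 => 3 * P
  | F b => if Nat.testBit (i : ℕ) (b : ℕ) then 4 * P else 2 * P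
  | T b => if Nat.testBit (i : ℕ) (b : ℕ) then 2 * P else 4 * P
  | R j => if j = i then 5 * P + 1 else 3 * P + 1
  | R' j => if j = i then 6 * P + 1 else 3 * P + 1
  | rk => 4 * P + 1
  | rk1 => 3 * P + 1
  | F' b => if Nat.testBit (i : ℕ) (b : ℕ) then 2 * P + 1 else 4 * P + 1
  | T' b => if Nat.testBit (i : ℕ) (b : ℕ) then 4 * P + 1 else 2 * P + 1

/-- Extension of the potential to all vertices. -/
def phi (m P : ℕ) (i : Fin (2 ^ m)) : V m P → ℤ
  | Sum.inl h => phiH m P i h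
  | Sum.inr ⟨s, t⟩ =>
      max (phiH m P i (ends m s).1 - ((t : ℕ) + 1))
        (phiH m P i (ends m s).2 + ((t : ℕ) + 1) - len m P s)

lemma hseg (i : Fin (2 ^ m)) (s : Seg m) :
    |phiH m P i (ends m s).1 - phiH m P i (ends m s).2| ≤ (len m P s : ℤ) := by
  rw [abs_le]
  cases s with
  | Llk j => rcases eq_or_ne j i with hj | hj <;> simp [ends, phiH, len, hj] <;> omega
  | Rrk j => rcases eq_or_ne j i with hj | hj <;> simp [ends, phiH, len, hj] <;> omega
  | lklk1 => simp [ends, phiH, len] <;> omega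
  | rkrk1 => simp [ends, phiH, len] <;> omega
  | lk1rk1 => simp [ends, phiH, len] <;> omega
  | Lbit j b =>
      rcases eq_or_ne j i with hj | hj
      · subst hj
        rcases hbit : Nat.testBit (j : ℕ) (b : ℕ) with _ | _ <;>
          simp [ends, phiH, len, hbit] <;> omega
      · rcases hbit : Nat.testBit (j : ℕ) (b : ℕ) with _ | _ <;>
          rcases hbit' : Nat.testBit (i : ℕ) (b : ℕ) with _ | _ <;>
          simp [ends, phiH, len, hbit, hbit', hj] <;> omega
  | Rbit j b =>
      rcases eq_or_ne j i with hj | hj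
      · subst hj
        rcases hbit : Nat.testBit (j : ℕ) (b : ℕ) with _ | _ <;>
          simp [ends, phiH, len, hbit] <;> omega
      · rcases hbit : Nat.testBit (j : ℕ) (b : ℕ) with _ | _ <;>
          rcases hbit' : Nat.testBit (i : ℕ) (b : ℕ) with _ | _ <;>
          simp [ends, phiH, len, hbit, hbit', hj] <;> omega
  | FT' b => rcases hbit : Nat.testBit (i : ℕ) (b : ℕ) with _ | _ <;>
      simp [ends, phiH, len, hbit] <;> omega
  | TF' b => rcases hbit : Nat.testBit (i : ℕ) (b : ℕ) with _ | _ <;>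
      simp [ends, phiH, len, hbit] <;> omega
  | Flk1 b => rcases hbit : Nat.testBit (i : ℕ) (b : ℕ) with _ | _ <;>
      simp [ends, phiH, len, hbit] <;> omega
  | Tlk1 b => rcases hbit : Nat.testBit (i : ℕ) (b : ℕ) with _ | _ <;>
      simp [ends, phiH, len, hbit] <;> omega
  | F'rk1 b => rcases hbit : Nat.testBit (i : ℕ) (b : ℕ) with _ | _ <;>
      simp [ends, phiH, len, hbit] <;> omega
  | T'rk1 b => rcases hbit : Nat.testBit (i : ℕ) (b : ℕ) with _ | _ <;>
      simp [ends, phiH, len, hbit] <;> omega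
  | L'L j => rcases eq_or_ne j i with hj | hj <;> simp [ends, phiH, len, hj] <;> omega
  | R'R j => rcases eq_or_ne j i with hj | hj <;> simp [ends, phiH, len, hj] <;> omega

lemma lip (i : Fin (2 ^ m)) (hSa : Sa i = true) (hSb : Sb i = true)
    {u v : V m P} (h : (AS m P Sa Sb).Adj u v) :
    |phi m P i u - phi m P i v| ≤ 1 := by
  have key : ∀ (s : Seg m) (t : Fin (len m P s - 1)) (x : Hub m),
      ((ends m s).1 = x ∧ (t : ℕ) = 0) ∨ ((ends m s).2 = x ∧ (t : ℕ) + 2 = len m P s) →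
      |phi m P i (Sum.inl x) - phi m P i (Sum.inr ⟨s, t⟩)| ≤ 1 := by
    intro s t x hr
    have hL := t.isLt
    have hs := hseg (P := P) i s
    rw [abs_le] at hs
    rw [abs_le]
    rcases hr with ⟨he, h0⟩ | ⟨he, h2⟩ <;> subst he <;> constructor <;>
      simp only [phi] <;>
      rcases max_cases (phiH m P i (ends m s).1 - ((t : ℕ) + 1))
        (phiH m P i (ends m s).2 + ((t : ℕ) + 1) - len m P s) with ⟨hm1, hm2⟩ | ⟨hm1, hm2⟩ <;>
      rw [hm1] <;> push_cast at * <;> omega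
  rw [AS, SimpleGraph.sup_adj] at h
  rcases h with h | h
  · rw [A, segGraph, SimpleGraph.fromRel_adj] at h
    obtain ⟨hne, h⟩ := h
    rcases u with a | ⟨s, t⟩ <;> rcases v with b | ⟨s', t'⟩
    · rcases h with hr | hr
      · replace hr : ∃ s, len m P s = 1 ∧ ends m s = (a, b) := hr
        obtain ⟨s, h1, h2⟩ := hr
        have := hseg (P := P) i s
        rw [h2, h1] at this
        simpa [phi] using this
      · replace hr : ∃ s, len m P s = 1 ∧ ends m s = (b, a) := hr
        obtain ⟨s, h1, h2⟩ := hr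
        have := hseg (P := P) i s
        rw [h2, h1] at this
        rw [abs_sub_comm]
        simpa [phi] using this
    · rcases h with hr | hr <;>
      · replace hr : ((ends m s').1 = a ∧ (t' : ℕ) = 0) ∨
            ((ends m s').2 = a ∧ (t' : ℕ) + 2 = len m P s') := hr
        exact key s' t' a hr
    · rw [abs_sub_comm]
      rcases h with hr | hr <;>
      · replace hr : ((ends m s).1 = b ∧ (t : ℕ) = 0) ∨
            ((ends m s).2 = b ∧ (t : ℕ) + 2 = len m P s) := hr
        exact key s t b hr
    · have step : ∀ hstep : (t : ℕ) + 1 = (t' : ℕ) ∨ (t' : ℕ) + 1 = (t : ℕ),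
          s = s' → |phi m P i (Sum.inr ⟨s, t⟩) - phi m P i (Sum.inr ⟨s', t'⟩)| ≤ 1 := by
        intro hstep he
        subst he
        have hL := t.isLt
        have hL' := t'.isLt
        rw [abs_le]
        constructor <;>
          simp only [phi] <;>
          rcases max_cases (phiH m P i (ends m s).1 - ((t : ℕ) + 1))
            (phiH m P i (ends m s).2 + ((t : ℕ) + 1) - len m P s) with ⟨hm1, hm2⟩ | ⟨hm1, hm2⟩ <;>
          rcases max_cases (phiH m P i (ends m s).1 - ((t' : ℕ) + 1))
            (phiH m P i (ends m s).2 + ((t' : ℕ) + 1) - len m P s) with ⟨hm1', hm2'⟩ | ⟨hm1', hm2'⟩ <;>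
          rw [hm1, hm1'] <;> push_cast at * <;> omega
      rcases h with hr | hr
      · replace hr : s = s' ∧ ((t : ℕ) + 1 = (t' : ℕ) ∨ (t' : ℕ) + 1 = (t : ℕ)) := hr
        exact step hr.2 hr.1
      · replace hr : s' = s ∧ ((t' : ℕ) + 1 = (t : ℕ) ∨ (t : ℕ) + 1 = (t' : ℕ)) := hr
        exact step (Or.symm hr.2) hr.1.symm
  · obtain ⟨hne, h⟩ := h
    have main : ∀ (x y : V m P), extraRel m P Sa Sb x y →
        |phi m P i x - phi m P i y| ≤ 1 := by
      intro x y hr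
      unfold extraRel at hr
      split at hr
      · rename_i j
        simp only [phi, phiH]
        have hji : ¬ (j = i) := fun hh => by rw [hh, hSa] at hr; exact Bool.noConfusion hr
        rw [if_neg hji]
        simp
      · rename_i j
        simp only [phi, phiH]
        have hji : ¬ (j = i) := fun hh => by rw [hh, hSb] at hr; exact Bool.noConfusion hr
        rw [if_neg hji]
        simp
      · exact hr.elim
    rcases h with h | h
    · exact main u v h
    · rw [abs_sub_comm]; exact main v u h

lemma lip_walk (i : Fin (2 ^ m)) (hSa : Sa i = true) (hSb : Sb i = true)
    {u v : V m P} (w : (AS m P Sa Sb).Walk u v) :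
    |phi m P i u - phi m P i v| ≤ (w.length : ℤ) := by
  induction w with
  | nil => simp
  | cons hadj p ih =>
      rename_i a b c
      calc |phi m P i a - phi m P i c|
          ≤ |phi m P i a - phi m P i b| + |phi m P i b - phi m P i c| := abs_sub_le _ _ _
        _ ≤ 1 + p.length := add_le_add (lip i hSa hSb hadj) ih
        _ = ((p.cons hadj).length : ℤ) := by simp [SimpleGraph.Walk.length_cons]; ring

lemma lower (hP : 1 ≤ P) (i : Fin (2 ^ m)) (hSa : Sa i = true) (hSb : Sb i = true) :
    6 * P + 1 ≤ (AS m P Sa Sb).dist (Sum.inl (L' i)) (Sum.inl (R' i)) := by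
  have e1 : WB (P := P) Sa Sb (Sum.inl (L' i)) (Sum.inl (L i)) P :=
    wb_seg hP (L'L i) _ _ rfl rfl P le_rfl
  have e2 : WB (P := P) Sa Sb (Sum.inl (R' i)) (Sum.inl (R i)) P :=
    wb_seg hP (R'R i) _ _ rfl rfl P le_rfl
  have e3 := wb_L_lk1 (Sa := Sa) (Sb := Sb) hP i
  have e4 := wb_lk1_rk1 (m := m) (P := P) (Sa := Sa) (Sb := Sb) hP
  have e5 : WB (P := P) Sa Sb (Sum.inl rk1) (Sum.inl (R i)) (2 * P) := (wb_R_rk1 hP i).symm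
  have hw : WB (P := P) Sa Sb (Sum.inl (L' i)) (Sum.inl (R' i)) (6 * P + 1) :=
    ((((e1.trans e3).trans e4).trans e5).trans e2.symm).mono (by omega)
  obtain ⟨w, hw'⟩ := hw.reachable.exists_walk_length_eq_dist
  have hlip := lip_walk i hSa hSb w
  have hu : phi m P i (Sum.inl (L' i)) = 0 := by simp [phi, phiH]
  have hv : phi m P i (Sum.inl (R' i)) = 6 * P + 1 := by simp [phi, phiH]
  rw [hu, hv, hw'] at hlip
  have : (6 * (P : ℤ) + 1) ≤ ((AS m P Sa Sb).dist (Sum.inl (L' i)) (Sum.inl (R' i)) : ℤ) := by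
    calc (6 * (P : ℤ) + 1) = |0 - (6 * (P : ℤ) + 1)| := by
          rw [zero_sub, abs_neg]; exact (abs_of_nonneg (by positivity)).symm
      _ ≤ _ := hlip
  exact_mod_cast this

end Lower

theorem statement8 (m P : ℕ) (hm : 1 ≤ m) (hP : 1 ≤ P)
    (Sa Sb : Fin (2 ^ m) → Bool) :
    ((∃ i : Fin (2 ^ m), Sa i = true ∧ Sb i = true) →
      ∃ u v : V m P, 6 * P + 1 ≤ (AS m P Sa Sb).dist u v) ∧
    ((∀ i : Fin (2 ^ m), Sa i = false ∨ Sb i = false) →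
      ∀ u v : V m P, (AS m P Sa Sb).dist u v ≤ 4 * P + 2) := by
  constructor
  · rintro ⟨i, hSa, hSb⟩
    exact ⟨Sum.inl (Hub.L' i), Sum.inl (Hub.R' i), lower hP i hSa hSb⟩
  · intro hyp u v
    exact upper hP hyp u v

end StretchDiam
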